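/- arXiv:2212.12593 — 2 statements merged into one kernel-verified Lean document; each statement's English description precedes it below -/
import Mathlib

section
/- Let a < b be real numbers and let w : [a,b] → ℝ be continuously differentiable with w(a) = w(b) = 0. Then for every λ ≥ 1, ∫_a^b (w'(z))² e^{2λz} dz ≥ (λ²/2) ∫_a^b (w(z))² e^{2λz} dz. -/
/-!
With `E z = exp (2λz)`, integrating `(w²)' E` by parts against the vanishing boundary values gives
`∫ w w' E = -λ ∫ w² E`. Expanding the nonnegative integral `∫ (w' + λw)² E` then yields
`∫ w'² E - λ² ∫ w² E ≥ 0`, which is stronger than the claim since `∫ w² E ≥ 0`.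
-/

open Set intervalIntegral

namespace Carleman

variable {a b : ℝ} {w w' : ℝ → ℝ}

theorem integral_mul_deriv_mul_exp_eq
    (hderiv : ∀ z ∈ uIcc a b, HasDerivAt w (w' z) z) (hw' : ContinuousOn w' (uIcc a b))
    (hwa : w a = 0) (hwb : w b = 0) (l : ℝ) :
    ∫ z in a..b, w z * w' z * Real.exp (2 * l * z) =
      -l * ∫ z in a..b, w z ^ 2 * Real.exp (2 * l * z) := by
  have hw : ContinuousOn w (uIcc a b) := HasDerivAt.continuousOn hderiv
  have hexp : ∀ z ∈ uIcc a b,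
      HasDerivAt (fun z => Real.exp (2 * l * z)) (2 * l * Real.exp (2 * l * z)) z := by
    intro z _
    simpa [mul_comm] using ((hasDerivAt_id z).const_mul (2 * l)).exp
  have hsq : ∀ z ∈ uIcc a b, HasDerivAt (fun z => w z ^ 2) (2 * (w z * w' z)) z := by
    intro z hz
    simpa [mul_assoc] using (hderiv z hz).fun_pow 2
  have hparts := integral_mul_deriv_eq_deriv_mul hexp hsq
    ((by fun_prop : Continuous fun z => 2 * l * Real.exp (2 * l * z)).intervalIntegrable _ _)
    ((continuousOn_const.mul (hw.mul hw')).intervalIntegrable)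
  simp only [hwa, hwb, zero_pow two_ne_zero, mul_zero, sub_zero, zero_sub] at hparts
  have hleft : ∫ z in a..b, Real.exp (2 * l * z) * (2 * (w z * w' z)) =
      2 * ∫ z in a..b, w z * w' z * Real.exp (2 * l * z) := by
    rw [← integral_const_mul]; congr 1; ext z; ring
  have hright : ∫ z in a..b, 2 * l * Real.exp (2 * l * z) * w z ^ 2 =
      2 * l * ∫ z in a..b, w z ^ 2 * Real.exp (2 * l * z) := by
    rw [← integral_const_mul]; congr 1; ext z; ring
  linarith

theorem integral_sq_add_mul_mul_exp_eq
    (hderiv : ∀ z ∈ uIcc a b, HasDerivAt w (w' z) z) (hw' : ContinuousOn w' (uIcc a b))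
    (hwa : w a = 0) (hwb : w b = 0) (l : ℝ) :
    ∫ z in a..b, (w' z + l * w z) ^ 2 * Real.exp (2 * l * z) =
      (∫ z in a..b, w' z ^ 2 * Real.exp (2 * l * z)) -
        l ^ 2 * ∫ z in a..b, w z ^ 2 * Real.exp (2 * l * z) := by
  have hw : ContinuousOn w (uIcc a b) := HasDerivAt.continuousOn hderiv
  have hE : ContinuousOn (fun z => Real.exp (2 * l * z)) (uIcc a b) := by fun_prop
  have hi1 :
      IntervalIntegrable (fun z => w' z ^ 2 * Real.exp (2 * l * z)) MeasureTheory.volume a b :=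
    ((hw'.pow 2).mul hE).intervalIntegrable
  have hi2 :
      IntervalIntegrable (fun z => w z * w' z * Real.exp (2 * l * z)) MeasureTheory.volume a b :=
    ((hw.mul hw').mul hE).intervalIntegrable
  have hi3 :
      IntervalIntegrable (fun z => w z ^ 2 * Real.exp (2 * l * z)) MeasureTheory.volume a b :=
    ((hw.pow 2).mul hE).intervalIntegrable
  have hexpand : ∫ z in a..b, (w' z + l * w z) ^ 2 * Real.exp (2 * l * z) =
      (∫ z in a..b, w' z ^ 2 * Real.exp (2 * l * z)) +
        2 * l * (∫ z in a..b, w z * w' z * Real.exp (2 * l * z)) +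
        l ^ 2 * ∫ z in a..b, w z ^ 2 * Real.exp (2 * l * z) := by
    rw [← integral_const_mul, ← integral_const_mul, ← integral_add hi1 (hi2.const_mul _),
      ← integral_add (hi1.add (hi2.const_mul _)) (hi3.const_mul _)]
    congr 1; ext z; ring
  rw [hexpand, integral_mul_deriv_mul_exp_eq hderiv hw' hwa hwb]
  ring

theorem sq_mul_integral_sq_mul_exp_le (hab : a ≤ b)
    (hderiv : ∀ z ∈ uIcc a b, HasDerivAt w (w' z) z) (hw' : ContinuousOn w' (uIcc a b))
    (hwa : w a = 0) (hwb : w b = 0) (l : ℝ) :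
    l ^ 2 * ∫ z in a..b, w z ^ 2 * Real.exp (2 * l * z) ≤
      ∫ z in a..b, w' z ^ 2 * Real.exp (2 * l * z) := by
  have hnonneg : 0 ≤ ∫ z in a..b, (w' z + l * w z) ^ 2 * Real.exp (2 * l * z) :=
    integral_nonneg hab fun z _ => by positivity
  rw [integral_sq_add_mul_mul_exp_eq hderiv hw' hwa hwb] at hnonneg
  linarith

end Carleman

theorem stmt_6 (a b : ℝ) (hab : a < b) (w w' : ℝ → ℝ)
    (hderiv : ∀ z ∈ Icc a b, HasDerivAt w (w' z) z)
    (hw'cont : ContinuousOn w' (Icc a b))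
    (hwa : w a = 0) (hwb : w b = 0) :
    ∀ l : ℝ, 1 ≤ l →
      (∫ z in a..b, (w' z) ^ 2 * Real.exp (2 * l * z)) ≥
        (l ^ 2 / 2) * ∫ z in a..b, (w z) ^ 2 * Real.exp (2 * l * z) := by
  intro l _
  rw [← uIcc_of_le hab.le] at hderiv hw'cont
  have hestimate := Carleman.sq_mul_integral_sq_mul_exp_le hab.le hderiv hw'cont hwa hwb l
  have hweighted : 0 ≤ ∫ z in a..b, w z ^ 2 * Real.exp (2 * l * z) :=
    integral_nonneg hab.le fun z _ => by positivity
  calc (l ^ 2 / 2) * ∫ z in a..b, w z ^ 2 * Real.exp (2 * l * z)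
      ≤ l ^ 2 * ∫ z in a..b, w z ^ 2 * Real.exp (2 * l * z) := by
        gcongr; linarith [sq_nonneg l]
    _ ≤ ∫ z in a..b, w' z ^ 2 * Real.exp (2 * l * z) := hestimate
end

section
/- Let a < b and let w : [a,b] → ℝ be continuously differentiable with w(a) = w(b) = 0. Then for all λ ≥ 1, ∫_a^b (w'(z))² e^{2λz} dz ≥ (1/4) ∫_a^b (w'(z))² e^{2λz} dz + (λ²/8) ∫_a^b (w(z))² e^{2λz} dz. -/
/-!
Integrating `(w² e^{2λz})' = (2ww' + 2λw²) e^{2λz}` against the zero boundary values gives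
`∫ w w' e^{2λz} = -λ ∫ w² e^{2λz}`. Expanding the nonnegative integral `∫ (w' + λw)² e^{2λz}`
then yields the weighted Hardy inequality `λ² ∫ w² e^{2λz} ≤ ∫ w'² e^{2λz}`, from which the
stated convex combination follows at once.
-/

open Set intervalIntegral

namespace WeightedHardy

variable {a b l : ℝ} {w w' : ℝ → ℝ}

theorem intervalIntegrable_mul_exp {f : ℝ → ℝ} (hf : ContinuousOn f (uIcc a b)) :
    IntervalIntegrable (fun z => f z * Real.exp (2 * l * z)) MeasureTheory.volume a b :=
  (hf.mul (by fun_prop)).intervalIntegrable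

theorem hasDerivAt_sq_mul_exp {z : ℝ} (hw : HasDerivAt w (w' z) z) :
    HasDerivAt (fun z => w z ^ 2 * Real.exp (2 * l * z))
      ((2 * (w z * w' z) + 2 * l * w z ^ 2) * Real.exp (2 * l * z)) z := by
  have hexp : HasDerivAt (fun z => Real.exp (2 * l * z)) (Real.exp (2 * l * z) * (2 * l)) z := by
    simpa using ((hasDerivAt_id' z).const_mul (2 * l)).exp
  exact ((hw.fun_pow 2).fun_mul hexp).congr_deriv (by norm_num; ring)

variable (hderiv : ∀ z ∈ uIcc a b, HasDerivAt w (w' z) z) (hw' : ContinuousOn w' (uIcc a b))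
include hderiv hw'

theorem integral_mul_deriv_mul_exp (hwa : w a = 0) (hwb : w b = 0) :
    ∫ z in a..b, w z * w' z * Real.exp (2 * l * z) =
      -l * ∫ z in a..b, w z ^ 2 * Real.exp (2 * l * z) := by
  have hw : ContinuousOn w (uIcc a b) := HasDerivAt.continuousOn hderiv
  have hboundary : ∫ z in a..b, (2 * (w z * w' z) + 2 * l * w z ^ 2) * Real.exp (2 * l * z) = 0 := by
    rw [integral_eq_sub_of_hasDerivAt (fun z hz => hasDerivAt_sq_mul_exp (hderiv z hz))
      (intervalIntegrable_mul_exp (by fun_prop)), hwa, hwb]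
    ring
  have hsplit : ∫ z in a..b, (2 * (w z * w' z) + 2 * l * w z ^ 2) * Real.exp (2 * l * z) =
      2 * (∫ z in a..b, w z * w' z * Real.exp (2 * l * z)) +
        2 * l * ∫ z in a..b, w z ^ 2 * Real.exp (2 * l * z) := by
    rw [← integral_const_mul, ← integral_const_mul, ← integral_add
      ((intervalIntegrable_mul_exp (hw.fun_mul hw')).const_mul 2)
      ((intervalIntegrable_mul_exp (hw.fun_pow 2)).const_mul _)]
    congr 1 with z
    ring
  linarith

theorem integral_sq_add_mul_mul_exp (hwa : w a = 0) (hwb : w b = 0) :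
    ∫ z in a..b, (w' z + l * w z) ^ 2 * Real.exp (2 * l * z) =
      (∫ z in a..b, w' z ^ 2 * Real.exp (2 * l * z)) -
        l ^ 2 * ∫ z in a..b, w z ^ 2 * Real.exp (2 * l * z) := by
  have hw : ContinuousOn w (uIcc a b) := HasDerivAt.continuousOn hderiv
  have hexpand : ∫ z in a..b, (w' z + l * w z) ^ 2 * Real.exp (2 * l * z) =
      (∫ z in a..b, w' z ^ 2 * Real.exp (2 * l * z)) +
        2 * l * (∫ z in a..b, w z * w' z * Real.exp (2 * l * z)) +
        l ^ 2 * ∫ z in a..b, w z ^ 2 * Real.exp (2 * l * z) := by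
    have hI := intervalIntegrable_mul_exp (l := l) (hw'.fun_pow 2)
    have hK := (intervalIntegrable_mul_exp (l := l) (hw.fun_mul hw')).const_mul (2 * l)
    have hJ := (intervalIntegrable_mul_exp (l := l) (hw.fun_pow 2)).const_mul (l ^ 2)
    rw [← integral_const_mul, ← integral_const_mul, ← integral_add hI hK,
      ← integral_add (hI.add hK) hJ]
    congr 1 with z
    ring
  rw [hexpand, integral_mul_deriv_mul_exp hderiv hw' hwa hwb]
  ring

theorem sq_mul_integral_sq_mul_exp_le (hab : a ≤ b) (hwa : w a = 0) (hwb : w b = 0) :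
    l ^ 2 * ∫ z in a..b, w z ^ 2 * Real.exp (2 * l * z) ≤
      ∫ z in a..b, w' z ^ 2 * Real.exp (2 * l * z) := by
  have hnonneg : 0 ≤ ∫ z in a..b, (w' z + l * w z) ^ 2 * Real.exp (2 * l * z) :=
    integral_nonneg hab fun z _ => by positivity
  rw [integral_sq_add_mul_mul_exp hderiv hw' hwa hwb] at hnonneg
  linarith

end WeightedHardy

theorem stmt_7 (a b : ℝ) (hab : a < b) (w w' : ℝ → ℝ)
    (hderiv : ∀ z ∈ Icc a b, HasDerivAt w (w' z) z)
    (hw'cont : ContinuousOn w' (Icc a b))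
    (hwa : w a = 0) (hwb : w b = 0) :
    ∀ l : ℝ, 1 ≤ l →
      (∫ z in a..b, (w' z) ^ 2 * Real.exp (2 * l * z)) ≥
        (1 / 4) * (∫ z in a..b, (w' z) ^ 2 * Real.exp (2 * l * z)) +
        (l ^ 2 / 8) * ∫ z in a..b, (w z) ^ 2 * Real.exp (2 * l * z) := by
  intro l _
  rw [← uIcc_of_le hab.le] at hderiv hw'cont
  have hhardy := WeightedHardy.sq_mul_integral_sq_mul_exp_le (l := l) hderiv hw'cont hab.le hwa hwb
  have hJ : 0 ≤ l ^ 2 * ∫ z in a..b, w z ^ 2 * Real.exp (2 * l * z) :=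
    mul_nonneg (sq_nonneg l) (integral_nonneg hab.le fun z _ => by positivity)
  linarith
end
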